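/- Let $E\subset\mathbb{R}^d$ with $\mathcal{L}(E)<\infty$ and let $(E_n)_{n\in\mathbb{N}}$ be Borel subsets of $E$. Then for $0<s<d$, $\Gamma_s\big(\bigcup_{i=1}^\infty E_i\big) = \lim_{n\to\infty}\Gamma_s\big(\bigcup_{i=1}^n E_i\big) = \inf_{n\in\mathbb{N}} \Gamma_s\big(\bigcup_{i=1}^n E_i\big)$. -/
import Mathlib


open MeasureTheory Filter Set
open scoped ENNReal NNReal

/-- The `s`-energy of a measure: `∬ |x-y|^{-s} dμ dμ`. -/
noncomputable def energy {X : Type*} [EMetricSpace X] [MeasurableSpace X] (s : ℝ)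
    (μ : Measure X) : ℝ≥0∞ :=
  ∫⁻ x, ∫⁻ y, edist x y ^ (-s) ∂μ ∂μ

/-- `μ ∈ 𝒫₀(E)`: `μ` is a Borel probability measure which is a finite positive
combination of restrictions of Lebesgue measure to Borel subsets of `E`. -/
def IsRegComb {d : ℕ} (E : Set (EuclideanSpace ℝ (Fin d)))
    (μ : Measure (EuclideanSpace ℝ (Fin d))) : Prop :=
  IsProbabilityMeasure μ ∧
    ∃ (k : ℕ) (c : Fin k → ℝ≥0∞) (F : Fin k → Set (EuclideanSpace ℝ (Fin d))),
      (∀ i, 0 < c i) ∧ (∀ i, MeasurableSet (F i)) ∧ (∀ i, F i ⊆ E) ∧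
      μ = ∑ i, c i • volume.restrict (F i)

open Classical in
/-- The minimal regular `s`-energy `Γ_s(E)` of a set `E ⊆ ℝ^d`. -/
noncomputable def minRegEnergy {d : ℕ} (s : ℝ) (E : Set (EuclideanSpace ℝ (Fin d))) : ℝ≥0∞ :=
  if 0 < volume E then
    ⨅ (μ : Measure (EuclideanSpace ℝ (Fin d))) (_ : IsRegComb E μ), energy s μ
  else ⊤

-- monotonicity of energy in the measure
lemma energy_mono {X : Type*} [EMetricSpace X] [MeasurableSpace X] (s : ℝ)
    {μ ν : Measure X} (h : μ ≤ ν) : energy s μ ≤ energy s ν :=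
  lintegral_mono' h (fun _ => lintegral_mono' h le_rfl)

lemma energy_smul {X : Type*} [EMetricSpace X] [MeasurableSpace X] (s : ℝ)
    (μ : Measure X) {a : ℝ≥0∞} (ha : a ≠ ⊤) :
    energy s (a • μ) = a * (a * energy s μ) := by
  unfold energy
  rw [lintegral_smul_measure]
  congr 1
  rw [← lintegral_const_mul' _ _ ha]
  simp [lintegral_smul_measure]

lemma minRegEnergy_anti {d : ℕ} (s : ℝ) {A B : Set (EuclideanSpace ℝ (Fin d))}
    (h : A ⊆ B) : minRegEnergy s B ≤ minRegEnergy s A := by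
  classical
  unfold minRegEnergy
  by_cases hA : 0 < volume A
  · have hB : 0 < volume B := lt_of_lt_of_le hA (measure_mono h)
    rw [if_pos hA, if_pos hB]
    refine le_iInf₂ fun μ hμ => ?_
    refine iInf₂_le μ ?_
    obtain ⟨h1, k, c, G, hc, hm, hsub, heq⟩ := hμ
    exact ⟨h1, k, c, G, hc, hm, fun i => (hsub i).trans h, heq⟩
  · rw [if_neg hA]
    exact le_top

lemma isRegComb_restrict {d : ℕ} {E A : Set (EuclideanSpace ℝ (Fin d))}
    {μ : Measure (EuclideanSpace ℝ (Fin d))} (hμ : IsRegComb E μ)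
    (hA : MeasurableSet A) (h0 : μ A ≠ 0) :
    IsRegComb A ((μ A)⁻¹ • μ.restrict A) := by
  obtain ⟨h1, k, c, G, hc, hm, hsub, heq⟩ := hμ
  have hAne : μ A ≠ ⊤ := (measure_lt_top μ A).ne
  constructor
  · constructor
    rw [Measure.smul_apply, Measure.restrict_apply MeasurableSet.univ, Set.univ_inter,
      smul_eq_mul, ENNReal.inv_mul_cancel h0 hAne]
  · refine ⟨k, fun i => (μ A)⁻¹ * c i, fun i => G i ∩ A, ?_, ?_, ?_, ?_⟩
    · intro i
      exact ENNReal.mul_pos (ENNReal.inv_ne_zero.2 hAne) (hc i).ne'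
    · intro i; exact (hm i).inter hA
    · intro i; exact Set.inter_subset_right
    · have key : μ.restrict A = ∑ i, c i • volume.restrict (G i ∩ A) := by
        rw [heq]
        ext t ht
        rw [Measure.restrict_apply ht, Measure.finset_sum_apply, Measure.finset_sum_apply]
        refine Finset.sum_congr rfl fun i _ => ?_
        rw [Measure.smul_apply, Measure.smul_apply, smul_eq_mul, smul_eq_mul,
          Measure.restrict_apply (ht.inter hA), Measure.restrict_apply ht, Set.inter_assoc, Set.inter_comm A (G i)]
      rw [key, Finset.smul_sum]
      refine Finset.sum_congr rfl fun i _ => ?_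
      rw [smul_smul]

lemma regComb_apply_pos_volume {d : ℕ} {E A : Set (EuclideanSpace ℝ (Fin d))}
    {μ : Measure (EuclideanSpace ℝ (Fin d))} (hμ : IsRegComb E μ)
    (hA : MeasurableSet A) (h0 : μ A ≠ 0) : 0 < volume A := by
  obtain ⟨h1, k, c, G, hc, hm, hsub, heq⟩ := hμ
  by_contra h
  push_neg at h
  have hv : volume A = 0 := le_antisymm h bot_le
  apply h0
  rw [heq, Measure.finset_sum_apply]
  refine Finset.sum_eq_zero fun i _ => ?_
  rw [Measure.smul_apply, smul_eq_mul, Measure.restrict_apply hA]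
  have : volume (A ∩ G i) = 0 := measure_mono_null Set.inter_subset_left hv
  simp [this]

lemma regComb_apply_self {d : ℕ} {E : Set (EuclideanSpace ℝ (Fin d))} (hE : MeasurableSet E)
    {μ : Measure (EuclideanSpace ℝ (Fin d))} (hμ : IsRegComb E μ) : μ E = 1 := by
  obtain ⟨h1, k, c, G, hc, hm, hsub, heq⟩ := hμ
  have : μ E = μ Set.univ := by
    rw [heq, Measure.finset_sum_apply, Measure.finset_sum_apply]
    refine Finset.sum_congr rfl fun i _ => ?_
    rw [Measure.smul_apply, Measure.smul_apply, Measure.restrict_apply hE,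
      Measure.restrict_apply MeasurableSet.univ, Set.univ_inter,
      Set.inter_eq_self_of_subset_right (hsub i)]
  rw [this, h1.measure_univ]

/-- For `E ⊆ ℝ^d` of finite Lebesgue measure, Borel subsets `E n ⊆ E` and `0 < s < d`,
`Γ_s(⋃ᵢ Eᵢ) = lim_n Γ_s(⋃_{i ≤ n} Eᵢ) = inf_n Γ_s(⋃_{i ≤ n} Eᵢ)`. -/
theorem stmt10 (d : ℕ) (s : ℝ) (hs : 0 < s) (hsd : s < d)
    (E : Set (EuclideanSpace ℝ (Fin d))) (hEfin : volume E < ⊤)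
    (F : ℕ → Set (EuclideanSpace ℝ (Fin d))) (hF : ∀ n, MeasurableSet (F n))
    (hFsub : ∀ n, F n ⊆ E) :
    Tendsto (fun n => minRegEnergy s (⋃ i, ⋃ (_ : i ≤ n), F i)) atTop
        (nhds (minRegEnergy s (⋃ i, F i))) ∧
      minRegEnergy s (⋃ i, F i) = ⨅ n : ℕ, minRegEnergy s (⋃ i, ⋃ (_ : i ≤ n), F i) := by
  set U : ℕ → Set (EuclideanSpace ℝ (Fin d)) := fun n => ⋃ i, ⋃ (_ : i ≤ n), F i with hU
  have hUmeas : ∀ n, MeasurableSet (U n) := fun n =>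
    MeasurableSet.iUnion fun i => MeasurableSet.iUnion fun _ => hF i
  have hUmono : Monotone U := fun n m hnm =>
    Set.iUnion₂_mono' fun i hi => ⟨i, hi.trans hnm, subset_rfl⟩
  have hUnion : (⋃ n, U n) = ⋃ i, F i := by
    ext x
    simp only [hU, Set.mem_iUnion]
    exact ⟨fun ⟨n, i, _, h⟩ => ⟨i, h⟩, fun ⟨i, h⟩ => ⟨i, i, le_rfl, h⟩⟩
  have hUsub : ∀ n, U n ⊆ ⋃ i, F i := fun n => hUnion ▸ Set.subset_iUnion U n
  have hanti : Antitone (fun n => minRegEnergy s (U n)) := fun n m h =>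
    minRegEnergy_anti s (hUmono h)
  have key : minRegEnergy s (⋃ i, F i) = ⨅ n, minRegEnergy s (U n) := by
    refine le_antisymm (le_iInf fun n => minRegEnergy_anti s (hUsub n)) ?_
    by_cases hvol : 0 < volume (⋃ i, F i)
    · rw [minRegEnergy, if_pos hvol]
      refine le_iInf₂ fun μ hμ => ?_
      by_cases hI : energy s μ = ⊤
      · rw [hI]; exact le_top
      have hmeasU : MeasurableSet (⋃ i, F i) := MeasurableSet.iUnion hF
      have h1 : Tendsto (fun n => μ (U n)) atTop (nhds 1) := by
        have := tendsto_measure_iUnion_atTop (μ := μ) hUmono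
        rwa [hUnion, regComb_apply_self hmeasU hμ] at this
      have hinv : Tendsto (fun n => (μ (U n))⁻¹) atTop (nhds 1) := by
        simpa using ENNReal.tendsto_inv_iff.2 h1
      have h2 : Tendsto (fun n => (μ (U n))⁻¹ * energy s μ) atTop (nhds (energy s μ)) := by
        simpa using ENNReal.Tendsto.mul_const hinv (Or.inl one_ne_zero)
      have hg : Tendsto (fun n => (μ (U n))⁻¹ * ((μ (U n))⁻¹ * energy s μ)) atTop
          (nhds (energy s μ)) := by
        simpa using ENNReal.Tendsto.mul hinv (Or.inl one_ne_zero) h2 (Or.inr ENNReal.one_ne_top)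
      refine ge_of_tendsto hg ?_
      have hev : ∀ᶠ n in atTop, 0 < μ (U n) := h1.eventually (eventually_gt_nhds zero_lt_one)
      filter_upwards [hev] with n hn
      have hμn := isRegComb_restrict hμ (hUmeas n) hn.ne'
      have hvoln : 0 < volume (U n) := regComb_apply_pos_volume hμ (hUmeas n) hn.ne'
      refine le_trans (iInf_le _ n) ?_
      rw [minRegEnergy, if_pos hvoln]
      refine le_trans (iInf₂_le _ hμn) ?_
      rw [energy_smul s _ (ENNReal.inv_ne_top.2 hn.ne')]
      exact mul_le_mul_right (mul_le_mul_right (energy_mono s Measure.restrict_le_self) _) _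
    · rw [minRegEnergy, if_neg hvol]; exact le_top
  exact ⟨key ▸ tendsto_atTop_iInf hanti, key⟩
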